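/- Let Hypotheses (C) and (D) hold, let u ∈ W^{1,1}(0,T; X) and x₀ ∈ X with x₀ ∈ Z(g(0, u(0), u(0) − x₀)), and let ξ ∈ W^{1,1}(0,T; X) solve the implicit (state-dependent) sweeping process (SGP) with data (u, x₀). Then |ξ'(t)| ≤ (1/(1 − δ))·( (1 + ωK₁/c)|u'(t)| + (K₁/c)a(t) ) for a.e. t ∈ (0,T). -/

import Mathlib

open MeasureTheory Set Filter Metric
open scoped RealInnerProductSpace Topology

/-- `f ∈ W^{1,1}(0,T;Y)` with a.e. derivative `f'`: `f'` is Bochner integrable on `(0,T)`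
and `f t = f 0 + ∫₀ᵗ f'` on `[0,T]`. -/
def IsW11 {Y : Type*} [NormedAddCommGroup Y] [NormedSpace ℝ Y] (T : ℝ) (f f' : ℝ → Y) : Prop :=
  IntegrableOn f' (Ioo 0 T) ∧ ∀ t ∈ Icc 0 T, f t = f 0 + ∫ s in (0:ℝ)..t, f' s

/-- Solution of the implicit state-dependent sweeping process (SGP) with data `(u, x₀)`. -/
def IsSGPSol {X W : Type*} [NormedAddCommGroup X] [InnerProductSpace ℝ X]
    (T r : ℝ) (Zs : W → Set X) (g : ℝ → X → X → W) (u : ℝ → X) (x₀ : X) (ξ ξ' : ℝ → X) : Prop :=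
  (∀ t ∈ Icc 0 T, u t - ξ t ∈ Zs (g t (u t) (ξ t))) ∧ u 0 - ξ 0 = x₀ ∧
    ∀ᵐ t ∂(volume.restrict (Ioo 0 T)), ∀ z ∈ Zs (g t (u t) (ξ t)),
      ⟪(u t - ξ t) - z, ξ' t⟫ + ‖ξ' t‖ / (2 * r) * ‖(u t - ξ t) - z‖ ^ 2 ≥ 0

/-!
Fix a time `t` at which `u`, `ξ` are differentiable and the variational inequality holds, and put
`x = u t - ξ t`, `w = g t (u t) (ξ t)`. Testing the inequality with `z = x + ε v` shows that
`⟪v, ξ' t⟫ ≤ 0` for every direction `v` along which `x` stays in `Z(w)` for small `ε > 0`. If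
`G x w < 1` every direction qualifies, so `ξ' t = 0`. If `G x w = 1`, every `v` with
`⟪∇ₓG, v⟫ < 0` qualifies, which forces `ξ' t` to be a nonnegative multiple of `n = ∇ₓG(x, w)`;
moreover `s ↦ G (u s - ξ s) (g s (u s) (ξ s))` stays `≤ 1` and equals `1` at `t`, so its
derivative `⟪n, u' - ξ'⟫ + ∇_wG (∂ₜg + ∂ᵤg u' + ∂_ξg ξ')` vanishes. With `‖n‖ ≥ c` this gives
`‖ξ'‖ ≤ ‖u'‖ + (K₁/c) (a + ω‖u'‖ + γ‖ξ'‖)`, and `K₁γ/c < 1` lets one solve for `‖ξ'‖`.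

The differentiability of that composite is the analytic part: `G` is Fréchet differentiable since
its Gâteaux derivatives are continuous, and `t ↦ g t (u t) (ξ t)` is differentiable although
`∂ₜg` is only integrable in time, because `∂ₜg` is Lipschitz in the state with an integrable
constant.
-/

theorem nonpos_of_eventually_le_mul {a b : ℝ} (h : ∀ᶠ ε in 𝓝[>] (0:ℝ), a ≤ ε * b) : a ≤ 0 := by
  have hlim : Tendsto (fun ε : ℝ => ε * b) (𝓝[>] 0) (𝓝 0) := by
    simpa using (tendsto_id.mul_const b).mono_left (nhdsWithin_le_nhds (a := (0:ℝ)))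
  exact ge_of_tendsto hlim h

section LineDerivative

variable {E E₁ E₂ F : Type*} [NormedAddCommGroup E] [NormedSpace ℝ E]
  [NormedAddCommGroup E₁] [NormedAddCommGroup E₂] [NormedAddCommGroup F]

theorem continuous_uncurry_of_norm_sub_le {f : E₁ → E₂ → F} {C : ℝ}
    (h : ∀ x y x' y', ‖f x y - f x' y'‖ ≤ C * (‖x - x'‖ + ‖y - y'‖)) : Continuous ↿f := by
  refine continuous_iff_continuousAt.2 fun p => tendsto_iff_norm_sub_tendsto_zero.2 ?_
  refine squeeze_zero (fun _ => norm_nonneg _) (fun q => h q.1 q.2 p.1 p.2) ?_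
  have : Continuous fun q : E₁ × E₂ => C * (‖q.1 - p.1‖ + ‖q.2 - p.2‖) := by fun_prop
  simpa using this.tendsto p

variable [NormedSpace ℝ E₁] [NormedSpace ℝ E₂] [NormedSpace ℝ F]

theorem hasLineDerivAt_of_tendsto_div {f : E → ℝ} {d : ℝ} {x v : E}
    (h : Tendsto (fun t : ℝ => (f (x + t • v) - f x) / t) (𝓝[≠] 0) (𝓝 d)) :
    HasLineDerivAt ℝ f d x v :=
  hasLineDerivAt_iff_tendsto_slope_zero.2 (by simpa [div_eq_inv_mul] using h)

theorem HasLineDerivAt.eventually_le_of_lt {f : E → ℝ} {x v : E} {d c : ℝ}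
    (hf : HasLineDerivAt ℝ f d x v) (hx : f x < c) : ∀ᶠ ε in 𝓝[>] (0:ℝ), f (x + ε • v) ≤ c := by
  have hcont : Tendsto (fun ε : ℝ => f (x + ε • v)) (𝓝[>] 0) (𝓝 (f x)) := by
    simpa using (HasDerivAt.continuousAt hf).tendsto.mono_left nhdsWithin_le_nhds
  exact hcont.eventually_le_const hx

theorem HasLineDerivAt.eventually_lt_of_neg {f : E → ℝ} {x v : E} {d : ℝ}
    (hf : HasLineDerivAt ℝ f d x v) (hd : d < 0) : ∀ᶠ ε in 𝓝[>] (0:ℝ), f (x + ε • v) < f x := by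
  filter_upwards [hf.tendsto_slope_zero_right.eventually_lt_const hd,
    self_mem_nhdsWithin] with ε hε (hpos : 0 < ε)
  have := mul_neg_of_pos_of_neg hpos hε
  rw [smul_eq_mul, mul_inv_cancel_left₀ hpos.ne'] at this
  linarith

theorem HasLineDerivAt.hasDerivAt_comp_line {f : E → F} {f' : F} {x v : E} {t : ℝ}
    (h : HasLineDerivAt ℝ f f' (x + t • v) v) : HasDerivAt (fun s : ℝ => f (x + s • v)) f' t := by
  have := HasDerivAt.comp_sub_const t t (f := fun s => f (x + t • v + s • v))
    (by rw [sub_self]; exact h)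
  convert this using 3 with s
  rw [sub_smul]
  abel

theorem hasFDerivAt_of_hasLineDerivAt_of_continuousAt {f : E → F} {f' : E → E →L[ℝ] F} {x : E}
    (hf : ∀ᶠ y in 𝓝 x, ∀ v, HasLineDerivAt ℝ f (f' y v) y v) (hcont : ContinuousAt f' x) :
    HasFDerivAt f (f' x) x := by
  rw [hasFDerivAt_iff_isLittleO_nhds_zero, Asymptotics.isLittleO_iff]
  intro ε hε
  have hclose : ∀ᶠ y in 𝓝 x, ‖f' y - f' x‖ ≤ ε := by
    filter_upwards [Metric.tendsto_nhds.1 hcont ε hε] with y hy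
    simpa [dist_eq_norm] using hy.le
  obtain ⟨δ, hδ, hball⟩ := Metric.eventually_nhds_iff_ball.1 (hf.and hclose)
  filter_upwards [Metric.ball_mem_nhds 0 hδ] with h hh
  have hseg : ∀ s ∈ Icc (0:ℝ) 1, x + s • h ∈ ball x δ := fun s hs => by
    rw [mem_ball, dist_eq_norm, add_sub_cancel_left, norm_smul, Real.norm_of_nonneg hs.1]
    rw [mem_ball, dist_zero_right] at hh
    nlinarith [norm_nonneg h, hs.2]
  have hderiv : ∀ s ∈ Icc (0:ℝ) 1, HasDerivWithinAt (fun τ : ℝ => f (x + τ • h) - τ • f' x h)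
      (f' (x + s • h) h - f' x h) (Icc 0 1) s := fun s hs => by
    have := ((hball _ (hseg s hs)).1 h).hasDerivAt_comp_line.sub
      ((hasDerivAt_id' s).smul_const (f' x h))
    rw [one_smul] at this
    exact this.hasDerivWithinAt
  have hbound : ∀ s ∈ Ico (0:ℝ) 1, ‖f' (x + s • h) h - f' x h‖ ≤ ε * ‖h‖ := fun s hs => by
    rw [← sub_apply]
    exact (ContinuousLinearMap.le_opNorm _ _).trans (mul_le_mul_of_nonneg_right
      (hball _ (hseg s (Ico_subset_Icc_self hs))).2 (norm_nonneg h))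
  simpa [sub_right_comm] using norm_image_sub_le_of_norm_deriv_le_segment_01' hderiv hbound

theorem hasFDerivAt_uncurry_of_hasLineDerivAt {f : E₁ → E₂ → F}
    {f₁ : E₁ → E₂ → E₁ →L[ℝ] F} {f₂ : E₁ → E₂ → E₂ →L[ℝ] F}
    (hf₁ : ∀ x y v, HasLineDerivAt ℝ (f · y) (f₁ x y v) x v)
    (hf₂ : ∀ x y v, HasLineDerivAt ℝ (f x ·) (f₂ x y v) y v)
    (hc₁ : Continuous ↿f₁) (hc₂ : Continuous ↿f₂) (p : E₁ × E₂) :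
    HasFDerivAt ↿f ((f₁ p.1 p.2).coprod (f₂ p.1 p.2)) p := by
  refine (hasStrictFDerivAt_uncurry_coprod (.of_forall fun q => ?_) (.of_forall fun q => ?_)
    hc₁.continuousAt hc₂.continuousAt).hasFDerivAt
  · exact hasFDerivAt_of_hasLineDerivAt_of_continuousAt (.of_forall fun y => hf₁ y q.2)
      (hc₁.comp (continuous_id.prodMk continuous_const)).continuousAt
  · exact hasFDerivAt_of_hasLineDerivAt_of_continuousAt (.of_forall fun y => hf₂ q.1 y)
      (hc₂.comp (continuous_const.prodMk continuous_id)).continuousAt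

end LineDerivative

theorem IsW11.ae_hasDerivAt {Y : Type*} [NormedAddCommGroup Y] [NormedSpace ℝ Y] [CompleteSpace Y]
    {T : ℝ} {f f' : ℝ → Y} (hf : IsW11 T f f') :
    ∀ᵐ t ∂volume.restrict (Ioo 0 T), HasDerivAt f (f' t) t := by
  obtain ⟨hint, hrep⟩ := hf
  have hloc : LocallyIntegrable ((Ioo 0 T).indicator f') volume :=
    ((integrable_indicator_iff measurableSet_Ioo).2 hint).locallyIntegrable
  rw [ae_restrict_iff' measurableSet_Ioo]
  filter_upwards [LocallyIntegrable.ae_hasDerivAt_integral hloc] with t hderiv ht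
  rw [indicator_of_mem ht] at hderiv
  refine ((hderiv 0).const_add (f 0)).congr_of_eventuallyEq ?_
  filter_upwards [isOpen_Ioo.mem_nhds ht] with s hs
  rw [hrep s (Ioo_subset_Icc_self hs)]
  congr 1
  refine intervalIntegral.integral_congr_ae (.of_forall fun τ hτ => ?_)
  rw [uIoc_of_le hs.1.le] at hτ
  exact (indicator_of_mem (show τ ∈ Ioo 0 T from ⟨hτ.1, hτ.2.trans_lt hs.2⟩) f').symm

theorem integrableOn_of_hasDerivAt_of_norm_le {F : Type*} [NormedAddCommGroup F]
    [NormedSpace ℝ F] [CompleteSpace F] {f f' : ℝ → F} {g : ℝ → ℝ} {a b : ℝ}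
    (hderiv : ∀ τ ∈ Ioo a b, HasDerivAt f (f' τ) τ) (hg : IntegrableOn g (Ioo a b))
    (hbound : ∀ᵐ τ ∂volume.restrict (Ioo a b), ‖f' τ‖ ≤ g τ) : IntegrableOn f' (Ioo a b) := by
  refine Integrable.mono' hg ((stronglyMeasurable_deriv f).aestronglyMeasurable.congr ?_) hbound
  filter_upwards [ae_restrict_mem measurableSet_Ioo] with τ hτ using (hderiv τ hτ).deriv

section TimeDependent

variable {E F : Type*} [NormedAddCommGroup E] [NormedAddCommGroup F] [NormedSpace ℝ F]
  [CompleteSpace F] {h h' : ℝ → E → F} {β : ℝ → ℝ} {a b : ℝ}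

theorem norm_sub_sub_sub_le_abs_integral_mul
    (hderiv : ∀ p, ∀ τ ∈ Ioo a b, HasDerivAt (h · p) (h' τ p) τ)
    (hint : ∀ p, IntegrableOn (h' · p) (Ioo a b))
    (hlip : ∀ᵐ τ ∂volume.restrict (Ioo a b), ∀ p q, ‖h' τ p - h' τ q‖ ≤ β τ * ‖p - q‖)
    (hβ : IntegrableOn β (Ioo a b)) {s t : ℝ} (hs : s ∈ Ioo a b) (ht : t ∈ Ioo a b) (p q : E) :
    ‖(h s p - h t p) - (h s q - h t q)‖ ≤ |∫ τ in t..s, β τ| * ‖p - q‖ := by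
  have hsub : uIcc t s ⊆ Ioo a b := ordConnected_Ioo.uIcc_subset ht hs
  have hii : ∀ p, IntervalIntegrable (h' · p) volume t s := fun p =>
    ((hint p).mono_set hsub).intervalIntegrable
  have hftc : ∀ p, h s p - h t p = ∫ τ in t..s, h' τ p := fun p =>
    (intervalIntegral.integral_eq_sub_of_hasDerivAt (fun τ hτ => hderiv p τ (hsub hτ))
      (hii p)).symm
  rw [hftc, hftc, ← intervalIntegral.integral_sub (hii p) (hii q)]
  refine (intervalIntegral.norm_integral_le_abs_of_norm_le ?_
    ((hβ.mono_set hsub).intervalIntegrable.mul_const ‖p - q‖)).trans_eq ?_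
  · filter_upwards [ae_restrict_of_ae_restrict_of_subset (uIoc_subset_uIcc.trans hsub) hlip]
      with τ hτ using hτ p q
  · rw [intervalIntegral.integral_mul_const, abs_mul, abs_norm]

variable [NormedSpace ℝ E]

theorem hasDerivAt_comp_of_lipschitz_timeDeriv
    (hderiv : ∀ p, ∀ τ ∈ Ioo a b, HasDerivAt (h · p) (h' τ p) τ)
    (hint : ∀ p, IntegrableOn (h' · p) (Ioo a b))
    (hlip : ∀ᵐ τ ∂volume.restrict (Ioo a b), ∀ p q, ‖h' τ p - h' τ q‖ ≤ β τ * ‖p - q‖)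
    (hβ : IntegrableOn β (Ioo a b)) {t : ℝ} (ht : t ∈ Ioo a b) {γ : ℝ → E} {γ' : E}
    {D : E →L[ℝ] F} (hD : HasFDerivAt (h t) D (γ t)) (hγ : HasDerivAt γ γ' t) :
    HasDerivAt (fun s => h s (γ s)) (h' t (γ t) + D γ') t := by
  have hprim : Tendsto (fun s => ∫ τ in t..s, β τ) (𝓝 t) (𝓝 0) := by
    obtain ⟨b₁, hab₁, hb₁t⟩ := exists_between ht.1
    obtain ⟨b₂, htb₂, hb₂b⟩ := exists_between ht.2
    have hcont := intervalIntegral.continuousOn_primitive_interval'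
      ((hβ.mono_set (ordConnected_Ioo.uIcc_subset ⟨hab₁, hb₁t.trans ht.2⟩
        ⟨ht.1.trans htb₂, hb₂b⟩)).intervalIntegrable)
      (Icc_subset_uIcc ⟨hb₁t.le, htb₂.le⟩)
    have hnhds : uIcc b₁ b₂ ∈ 𝓝 t := mem_of_superset (Icc_mem_nhds hb₁t htb₂) Icc_subset_uIcc
    simpa using (hcont.continuousAt hnhds).tendsto
  set R : ℝ → F := fun s => (h s (γ s) - h t (γ s)) - (h s (γ t) - h t (γ t))
  have hR : HasDerivAt R 0 t := by
    have hsmall : (fun s => |∫ τ in t..s, β τ| * ‖γ s - γ t‖) =o[𝓝 t] (fun s => s - t) := by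
      simpa only [one_mul] using ((Asymptotics.isLittleO_one_iff ℝ).2
        (by simpa using hprim.abs)).mul_isBigO hγ.isBigO_sub.norm_left
    refine .of_isLittleO (Asymptotics.IsBigO.trans_isLittleO ?_ hsmall)
    refine Asymptotics.IsBigO.of_bound 1 ?_
    filter_upwards [isOpen_Ioo.mem_nhds ht] with s hs
    simpa [R, abs_mul] using
      norm_sub_sub_sub_le_abs_integral_mul hderiv hint hlip hβ hs ht (γ s) (γ t)
  have := ((hR.add (hderiv (γ t) t ht)).add (hD.comp_hasDerivAt t hγ)).sub_const (h t (γ t))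
  convert this using 1
  · ext s
    simp only [R, Pi.add_apply, Function.comp_apply]
    abel
  · simp

end TimeDependent

theorem hasDerivAt_comp₂_of_lipschitz_partials {X W : Type*} [NormedAddCommGroup X]
    [NormedSpace ℝ X] [NormedAddCommGroup W] [NormedSpace ℝ W] [CompleteSpace W]
    {g gt : ℝ → X → X → W} {gu gξ : ℝ → X → X → X →L[ℝ] W} {α β : ℝ → ℝ} {Cu Cξ a b : ℝ}
    (hgt : ∀ p q, ∀ τ ∈ Ioo a b, HasDerivAt (g · p q) (gt τ p q) τ)
    (hgu : ∀ τ p q, HasFDerivAt (g τ · q) (gu τ p q) p)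
    (hgξ : ∀ τ p q, HasFDerivAt (g τ p ·) (gξ τ p q) q)
    (hlipu : ∀ τ p q p' q', ‖gu τ p q - gu τ p' q'‖ ≤ Cu * (‖p - p'‖ + ‖q - q'‖))
    (hlipξ : ∀ τ p q p' q', ‖gξ τ p q - gξ τ p' q'‖ ≤ Cξ * (‖p - p'‖ + ‖q - q'‖))
    (hbound : ∀ᵐ τ ∂volume.restrict (Ioo a b), ∀ p q, ‖gt τ p q‖ ≤ α τ)
    (hα : IntegrableOn α (Ioo a b))
    (hlipt : ∀ᵐ τ ∂volume.restrict (Ioo a b), ∀ p q p' q',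
      ‖gt τ p q - gt τ p' q'‖ ≤ β τ * (‖p - p'‖ + ‖q - q'‖))
    (hβ : IntegrableOn β (Ioo a b)) {t : ℝ} (ht : t ∈ Ioo a b) {u ξ : ℝ → X} {u' ξ' : X}
    (hu : HasDerivAt u u' t) (hξ : HasDerivAt ξ ξ' t) :
    HasDerivAt (fun s => g s (u s) (ξ s))
      (gt t (u t) (ξ t) + (gu t (u t) (ξ t) u' + gξ t (u t) (ξ t) ξ')) t := by
  have hD : HasFDerivAt (fun p : X × X => g t p.1 p.2)
      ((gu t (u t) (ξ t)).coprod (gξ t (u t) (ξ t))) (u t, ξ t) :=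
    (hasStrictFDerivAt_uncurry_coprod (u := (u t, ξ t)) (f := g t)
      (.of_forall fun p => hgu t p.1 p.2) (.of_forall fun p => hgξ t p.1 p.2)
      (continuous_uncurry_of_norm_sub_le (hlipu t)).continuousAt
      (continuous_uncurry_of_norm_sub_le (hlipξ t)).continuousAt).hasFDerivAt
  have hlip : ∀ᵐ τ ∂volume.restrict (Ioo a b), ∀ p q : X × X,
      ‖gt τ p.1 p.2 - gt τ q.1 q.2‖ ≤ 2 * |β τ| * ‖p - q‖ := by
    filter_upwards [hlipt] with τ hτ p q
    calc ‖gt τ p.1 p.2 - gt τ q.1 q.2‖ ≤ β τ * (‖p.1 - q.1‖ + ‖p.2 - q.2‖) := hτ _ _ _ _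
      _ ≤ |β τ| * (‖p - q‖ + ‖p - q‖) :=
        mul_le_mul (le_abs_self _) (add_le_add (norm_fst_le (p - q)) (norm_snd_le (p - q)))
          (by positivity) (abs_nonneg _)
      _ = 2 * |β τ| * ‖p - q‖ := by ring
  have hint : ∀ p : X × X, IntegrableOn (gt · p.1 p.2) (Ioo a b) := fun p =>
    integrableOn_of_hasDerivAt_of_norm_le (hgt p.1 p.2) hα
      (by filter_upwards [hbound] with τ hτ using hτ p.1 p.2)
  simpa using hasDerivAt_comp_of_lipschitz_timeDeriv (h := fun τ p => g τ p.1 p.2)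
    (fun p => hgt p.1 p.2) hint hlip (hβ.abs.const_mul 2) ht hD (hu.prodMk hξ)

section NormalCone

variable {X : Type*} [NormedAddCommGroup X] [InnerProductSpace ℝ X]

theorem inner_nonpos_of_eventually_mem {S : Set X} {x p v : X} {κ : ℝ}
    (hvi : ∀ z ∈ S, 0 ≤ ⟪x - z, p⟫ + κ * ‖x - z‖ ^ 2)
    (hv : ∀ᶠ ε in 𝓝[>] (0:ℝ), x + ε • v ∈ S) : ⟪v, p⟫ ≤ 0 := by
  refine nonpos_of_eventually_le_mul (b := κ * ‖v‖ ^ 2) ?_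
  filter_upwards [hv, self_mem_nhdsWithin] with ε hε (hpos : 0 < ε)
  have := hvi _ hε
  rw [sub_add_cancel_left, inner_neg_left, norm_neg, real_inner_smul_left, norm_smul,
    Real.norm_of_nonneg hpos.le] at this
  refine le_of_mul_le_mul_left ?_ hpos
  nlinarith

theorem inner_eq_norm_mul_norm_of_forall_inner_neg {n p : X}
    (h : ∀ v, ⟪n, v⟫ < 0 → ⟪v, p⟫ ≤ 0) : ⟪n, p⟫ = ‖n‖ * ‖p‖ := by
  rcases eq_or_ne n 0 with rfl | hn
  · simp
  have hn2 : 0 < ‖n‖ ^ 2 := by positivity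
  have hclosed : ∀ v, ⟪n, v⟫ ≤ 0 → ⟪v, p⟫ ≤ 0 := fun v hv => by
    refine nonpos_of_eventually_le_mul (b := ⟪n, p⟫) ?_
    filter_upwards [self_mem_nhdsWithin] with ε (hε : 0 < ε)
    have := h (v - ε • n) (by
      rw [inner_sub_right, real_inner_smul_right, real_inner_self_eq_norm_sq]; nlinarith)
    rw [inner_sub_left, real_inner_smul_left] at this
    linarith
  have hnonneg : 0 ≤ ⟪n, p⟫ := by
    have := hclosed (-n) (by rw [inner_neg_right, real_inner_self_eq_norm_sq]; linarith)
    rw [inner_neg_left] at this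
    linarith
  -- `w = ‖n‖² p - ⟪n, p⟫ n` is orthogonal to `n`, and `⟪w, p⟫ = 0` is equality in Cauchy–Schwarz.
  have hw : ⟪n, ‖n‖ ^ 2 • p - ⟪n, p⟫ • n⟫ = 0 := by
    rw [inner_sub_right, real_inner_smul_right, real_inner_smul_right,
      real_inner_self_eq_norm_sq]
    ring
  have h₁ := hclosed _ hw.le
  have h₂ := hclosed (-(‖n‖ ^ 2 • p - ⟪n, p⟫ • n)) (by rw [inner_neg_right, hw, neg_zero])
  rw [inner_neg_left, inner_sub_left, real_inner_smul_left, real_inner_smul_left,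
    real_inner_self_eq_norm_sq] at h₂
  rw [inner_sub_left, real_inner_smul_left, real_inner_smul_left,
    real_inner_self_eq_norm_sq] at h₁
  have hsq : ⟪n, p⟫ ^ 2 = (‖n‖ * ‖p‖) ^ 2 := by nlinarith
  exact (pow_left_inj₀ hnonneg (by positivity) two_ne_zero).1 hsq

theorem eq_zero_of_vi_of_lt {f : X → ℝ} {x p : X} {κ c : ℝ}
    (hf : ∀ v, LineDifferentiableAt ℝ f x v) (hx : f x < c)
    (hvi : ∀ z, f z ≤ c → 0 ≤ ⟪x - z, p⟫ + κ * ‖x - z‖ ^ 2) : p = 0 :=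
  real_inner_self_nonpos.1 <|
    inner_nonpos_of_eventually_mem hvi ((hf p).hasLineDerivAt.eventually_le_of_lt hx)

theorem inner_eq_norm_mul_norm_of_vi {f : X → ℝ} {x n p : X} {κ : ℝ}
    (hf : ∀ v, HasLineDerivAt ℝ f ⟪n, v⟫ x v)
    (hvi : ∀ z, f z ≤ f x → 0 ≤ ⟪x - z, p⟫ + κ * ‖x - z‖ ^ 2) : ⟪n, p⟫ = ‖n‖ * ‖p‖ :=
  inner_eq_norm_mul_norm_of_forall_inner_neg fun v hv =>
    inner_nonpos_of_eventually_mem hvi (((hf v).eventually_lt_of_neg hv).mono fun _ => le_of_lt)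

theorem norm_le_of_inner_add_eq_zero {W : Type*} [NormedAddCommGroup W] [NormedSpace ℝ W]
    {n p q : X} {ℓ : StrongDual ℝ W} {θ : W} {L₁ L₂ : X →L[ℝ] W} {c K A ω γ : ℝ}
    (hc : 0 < c) (hn : c ≤ ‖n‖) (halign : ⟪n, p⟫ = ‖n‖ * ‖p‖)
    (hcrit : ⟪n, q - p⟫ + ℓ (θ + (L₁ q + L₂ p)) = 0) (hℓ : ‖ℓ‖ ≤ K) (hθ : ‖θ‖ ≤ A)
    (hL₁ : ‖L₁‖ ≤ ω) (hL₂ : ‖L₂‖ ≤ γ) (hδ : K * γ / c < 1) :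
    ‖p‖ ≤ 1 / (1 - K * γ / c) * ((1 + ω * K / c) * ‖q‖ + K / c * A) := by
  set B := A + ω * ‖q‖ + γ * ‖p‖
  have hK : 0 ≤ K := (norm_nonneg ℓ).trans hℓ
  have hθB : ‖θ + (L₁ q + L₂ p)‖ ≤ B :=
    calc ‖θ + (L₁ q + L₂ p)‖ ≤ ‖θ‖ + (‖L₁ q‖ + ‖L₂ p‖) :=
          (norm_add_le _ _).trans (add_le_add_right (norm_add_le _ _) _)
      _ ≤ B := by linarith [L₁.le_of_opNorm_le hL₁ q, L₂.le_of_opNorm_le hL₂ p]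
  have hB : 0 ≤ B := (norm_nonneg _).trans hθB
  have hnp : ‖n‖ * ‖p‖ ≤ ‖n‖ * ‖q‖ + K * B := by
    have hℓθ := (le_abs_self _).trans ((ℓ.le_opNorm _).trans
      (mul_le_mul hℓ hθB (norm_nonneg _) hK))
    rw [inner_sub_right, halign] at hcrit
    linarith [real_inner_le_norm n q]
  have hp : ‖p‖ ≤ ‖q‖ + K / c * B := by
    rw [div_mul_eq_mul_div, ← sub_le_iff_le_add', le_div_iff₀ hc]
    rcases le_total ‖p‖ ‖q‖ with hpq | hpq
    · nlinarith [mul_nonneg hK hB]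
    · nlinarith [mul_le_mul_of_nonneg_left hn (sub_nonneg.2 hpq)]
  have hexp : K / c * B = K / c * A + ω * K / c * ‖q‖ + K * γ / c * ‖p‖ := by ring
  rw [one_div, inv_mul_eq_div, le_div_iff₀ (by linarith)]
  linarith

end NormalCone

theorem implicit_apriori_bound_general
    {X W : Type*} [NormedAddCommGroup X] [InnerProductSpace ℝ X] [CompleteSpace X]
    [NormedAddCommGroup W] [NormedSpace ℝ W] [CompleteSpace W]
    (G : X → W → ℝ)
    (Zs : W → Set X) (hZ : ∀ w, Zs w = {z : X | G z w ≤ 1})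
    (Gx : X → W → X)
    (lam c L : ℝ) (hc : 0 < c)
    (hyp1 : ∀ (x : X) (w : W), G x w = 1 → c ≤ ‖Gx x w‖)
    (Gw : X → W → StrongDual ℝ W)
    (hgradxall : ∀ (x : X) (w : W), ∀ y : X,
      Tendsto (fun t : ℝ => (G (x + t • y) w - G x w) / t) (𝓝[≠] (0:ℝ)) (𝓝 ⟪Gx x w, y⟫))
    (hgradw : ∀ (x : X) (w : W) (v : W),
      Tendsto (fun t : ℝ => (G x (w + t • v) - G x w) / t) (𝓝[≠] (0:ℝ)) (𝓝 (Gw x w v)))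
    (K₁ C₀ C₁ : ℝ) (hK₁ : 0 < K₁)
    (hbdw : ∀ (x : X) (w : W), ‖Gw x w‖ ≤ K₁)
    (hlipx : ∀ (x x' : X) (w w' : W), ‖Gx x w - Gx x' w'‖ ≤ C₀ * (‖x - x'‖ + ‖w - w'‖))
    (hlipw : ∀ (x x' : X) (w w' : W), ‖Gw x w - Gw x' w'‖ ≤ C₁ * (‖x - x'‖ + ‖w - w'‖))
    (T : ℝ)
    (g : ℝ → X → X → W)
    (gt : ℝ → X → X → W) (gu gξ : ℝ → X → X → (X →L[ℝ] W))
    (hgt : ∀ (uu ξξ : X), ∀ t ∈ Icc (0:ℝ) T,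
      HasDerivWithinAt (fun τ => g τ uu ξξ) (gt t uu ξξ) (Icc 0 T) t)
    (hgu : ∀ (t : ℝ) (uu ξξ : X), HasFDerivAt (fun v => g t v ξξ) (gu t uu ξξ) uu)
    (hgxi : ∀ (t : ℝ) (uu ξξ : X), HasFDerivAt (fun v => g t uu v) (gξ t uu ξξ) ξξ)
    (γ ω Cξ Cu : ℝ) (hω : 0 < ω)
    (a b : ℝ → ℝ) (ha : IntegrableOn a (Ioo 0 T)) (hb : IntegrableOn b (Ioo 0 T))
    (hbd₁ : ∀ (t : ℝ) (uu ξξ : X), ‖gξ t uu ξξ‖ ≤ γ)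
    (hbd₂ : ∀ (t : ℝ) (uu ξξ : X), ‖gu t uu ξξ‖ ≤ ω)
    (hbd₃ : ∀ᵐ t ∂(volume.restrict (Ioo 0 T)), ∀ (uu ξξ : X), ‖gt t uu ξξ‖ ≤ a t)
    (hlip₁ : ∀ (t : ℝ) (uu ξξ vv ηη : X),
      ‖gξ t uu ξξ - gξ t vv ηη‖ ≤ Cξ * (‖uu - vv‖ + ‖ξξ - ηη‖))
    (hlip₂ : ∀ (t : ℝ) (uu ξξ vv ηη : X),
      ‖gu t uu ξξ - gu t vv ηη‖ ≤ Cu * (‖uu - vv‖ + ‖ξξ - ηη‖))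
    (hlip₃ : ∀ᵐ t ∂(volume.restrict (Ioo 0 T)), ∀ (uu ξξ vv ηη : X),
      ‖gt t uu ξξ - gt t vv ηη‖ ≤ b t * (‖uu - vv‖ + ‖ξξ - ηη‖))
    (hδ : K₁ * γ / c < 1)
    (u u' : ℝ → X) (hu : IsW11 T u u')
    (x₀ : X)
    (ξ ξ' : ℝ → X) (hξ : IsW11 T ξ ξ')
    (hsol : IsSGPSol T (c / lam) Zs g u x₀ ξ ξ') :
    ∀ᵐ t ∂(volume.restrict (Ioo 0 T)),
      ‖ξ' t‖ ≤ 1 / (1 - K₁ * γ / c) *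
        ((1 + ω * K₁ / c) * ‖u' t‖ + K₁ / c * a t) := by
  obtain ⟨hmem, -, hvi⟩ := hsol
  simp only [hZ, mem_ofPred_eq] at hmem hvi
  have hGdiff : ∀ x w, HasFDerivAt (fun p : X × W => G p.1 p.2)
      ((innerSL ℝ (Gx x w)).coprod (Gw x w)) (x, w) := fun x w =>
    hasFDerivAt_uncurry_of_hasLineDerivAt (f₁ := fun x w => innerSL ℝ (Gx x w))
      (fun x w v => hasLineDerivAt_of_tendsto_div (hgradxall x w v))
      (fun x w v => hasLineDerivAt_of_tendsto_div (hgradw x w v))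
      ((innerSL ℝ).continuous.comp
        (continuous_uncurry_of_norm_sub_le fun x w x' w' => hlipx x x' w w'))
      (continuous_uncurry_of_norm_sub_le fun x w x' w' => hlipw x x' w w') (x, w)
  filter_upwards [hu.ae_hasDerivAt, hξ.ae_hasDerivAt, hvi, hbd₃, ae_restrict_mem measurableSet_Ioo]
    with t hut hξt hvit hat ht
  set x := u t - ξ t
  set w := g t (u t) (ξ t)
  have hGx : ∀ v, HasLineDerivAt ℝ (G · w) ⟪Gx x w, v⟫ x v := fun v =>
    hasLineDerivAt_of_tendsto_div (hgradxall x w v)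
  rcases (hmem t (Ioo_subset_Icc_self ht)).lt_or_eq with hlt | heq
  · have ha0 : 0 ≤ a t := (norm_nonneg _).trans (hat 0 0)
    have hδ' : 0 ≤ 1 / (1 - K₁ * γ / c) := by rw [one_div, inv_nonneg]; linarith
    rw [eq_zero_of_vi_of_lt (fun v => (hGx v).lineDifferentiableAt) hlt hvit, norm_zero]
    positivity
  · have hθ := hasDerivAt_comp₂_of_lipschitz_partials
      (fun p q τ hτ => (hgt p q τ (Ioo_subset_Icc_self hτ)).hasDerivAt (Icc_mem_nhds hτ.1 hτ.2))
      hgu hgxi hlip₂ hlip₁ hbd₃ ha hlip₃ hb ht hut hξt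
    have hφ := (hGdiff x w).comp_hasDerivAt t ((hut.sub hξt).prodMk hθ)
    have hmax : IsLocalMax (fun s => G (u s - ξ s) (g s (u s) (ξ s))) t := by
      filter_upwards [isOpen_Ioo.mem_nhds ht] with s hs
      exact (hmem s (Ioo_subset_Icc_self hs)).trans heq.ge
    refine norm_le_of_inner_add_eq_zero hc (hyp1 x w heq)
      (inner_eq_norm_mul_norm_of_vi hGx (heq ▸ hvit)) ?_ (hbdw x w) (hat (u t) (ξ t))
      (hbd₂ t (u t) (ξ t)) (hbd₁ t (u t) (ξ t)) hδ
    simpa using hmax.hasDerivAt_eq_zero hφ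

/-- Lemma 5.2 of the paper: a priori bound for the derivative of any solution of the
implicit (state-dependent) sweeping process, with `δ = K₁γ/c < 1`. -/
theorem implicit_apriori_bound
    {X W : Type*} [NormedAddCommGroup X] [InnerProductSpace ℝ X] [CompleteSpace X]
    [NormedAddCommGroup W] [NormedSpace ℝ W] [CompleteSpace W]
    (G : X → W → ℝ) (hGnonneg : ∀ (x : X) (w : W), 0 ≤ G x w)
    (hGlip : LocallyLipschitz (fun p : X × W => G p.1 p.2))
    (Zs : W → Set X) (hZ : ∀ w, Zs w = {z : X | G z w ≤ 1})
    (Gx : X → W → X)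
    (hgradx : ∀ w : W, ∀ z ∈ Zs w, ∀ y : X,
      Tendsto (fun t : ℝ => (G (z + t • y) w - G z w) / t) (𝓝[≠] (0:ℝ)) (𝓝 ⟪Gx z w, y⟫))
    (lam c L : ℝ) (hlam : 0 < lam) (hc : 0 < c) (hL : 0 < L)
    (μ₁ : W → ℝ → ℝ) (μ₂ : ℝ → ℝ)
    (hμ₁zero : ∀ w, μ₁ w 0 = 0) (hμ₂zero : μ₂ 0 = 0)
    (hμ₁top : ∀ w, Tendsto (μ₁ w) atTop atTop) (hμ₂top : Tendsto μ₂ atTop atTop)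
    (hyp1 : ∀ (x : X) (w : W), G x w = 1 → c ≤ ‖Gx x w‖)
    (hyp2 : ∀ w : W, ∀ x ∈ Zs w, ∀ y ∈ Zs w, ‖Gx x w - Gx y w‖ ≤ μ₁ w ‖x - y‖)
    (hyp3 : ∀ w : W, ∀ x ∈ frontier (Zs w), ∀ z ∈ Zs w,
      ⟪Gx x w - Gx z w, x - z⟫ ≥ -lam * ‖x - z‖ ^ 2)
    (hyp4 : ∀ (x : X) (w w' : W), |G x w - G x w'| ≤ L * ‖w - w'‖)
    (hyp5 : ∀ ρ > (0:ℝ), ∀ (w : W) (x : X), ρ ≤ infDist x (Zs w) → μ₂ ρ ≤ G x w - 1)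
    (Gw : X → W → StrongDual ℝ W)
    (hgradxall : ∀ (x : X) (w : W), ∀ y : X,
      Tendsto (fun t : ℝ => (G (x + t • y) w - G x w) / t) (𝓝[≠] (0:ℝ)) (𝓝 ⟪Gx x w, y⟫))
    (hgradw : ∀ (x : X) (w : W) (v : W),
      Tendsto (fun t : ℝ => (G x (w + t • v) - G x w) / t) (𝓝[≠] (0:ℝ)) (𝓝 (Gw x w v)))
    (K₀ K₁ C₀ C₁ : ℝ) (hK₀ : 0 < K₀) (hK₁ : 0 < K₁) (hC₀ : 0 < C₀) (hC₁ : 0 < C₁)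
    (hbdx : ∀ (x : X) (w : W), ‖Gx x w‖ ≤ K₀)
    (hbdw : ∀ (x : X) (w : W), ‖Gw x w‖ ≤ K₁)
    (hlipx : ∀ (x x' : X) (w w' : W), ‖Gx x w - Gx x' w'‖ ≤ C₀ * (‖x - x'‖ + ‖w - w'‖))
    (hlipw : ∀ (x x' : X) (w w' : W), ‖Gw x w - Gw x' w'‖ ≤ C₁ * (‖x - x'‖ + ‖w - w'‖))
    (T : ℝ) (hT : 0 < T)
    (g : ℝ → X → X → W)
    (hgcont : ContinuousOn (fun p : ℝ × X × X => g p.1 p.2.1 p.2.2)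
      (Icc (0:ℝ) T ×ˢ (univ : Set (X × X))))
    (gt : ℝ → X → X → W) (gu gξ : ℝ → X → X → (X →L[ℝ] W))
    (hgt : ∀ (uu ξξ : X), ∀ t ∈ Icc (0:ℝ) T,
      HasDerivWithinAt (fun τ => g τ uu ξξ) (gt t uu ξξ) (Icc 0 T) t)
    (hgu : ∀ (t : ℝ) (uu ξξ : X), HasFDerivAt (fun v => g t v ξξ) (gu t uu ξξ) uu)
    (hgxi : ∀ (t : ℝ) (uu ξξ : X), HasFDerivAt (fun v => g t uu v) (gξ t uu ξξ) ξξ)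
    (γ ω Cξ Cu : ℝ) (hγ : 0 < γ) (hω : 0 < ω) (hCξ : 0 < Cξ) (hCu : 0 < Cu)
    (a b : ℝ → ℝ) (ha : IntegrableOn a (Ioo 0 T)) (hb : IntegrableOn b (Ioo 0 T))
    (hbd₁ : ∀ (t : ℝ) (uu ξξ : X), ‖gξ t uu ξξ‖ ≤ γ)
    (hbd₂ : ∀ (t : ℝ) (uu ξξ : X), ‖gu t uu ξξ‖ ≤ ω)
    (hbd₃ : ∀ᵐ t ∂(volume.restrict (Ioo 0 T)), ∀ (uu ξξ : X), ‖gt t uu ξξ‖ ≤ a t)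
    (hlip₁ : ∀ (t : ℝ) (uu ξξ vv ηη : X),
      ‖gξ t uu ξξ - gξ t vv ηη‖ ≤ Cξ * (‖uu - vv‖ + ‖ξξ - ηη‖))
    (hlip₂ : ∀ (t : ℝ) (uu ξξ vv ηη : X),
      ‖gu t uu ξξ - gu t vv ηη‖ ≤ Cu * (‖uu - vv‖ + ‖ξξ - ηη‖))
    (hlip₃ : ∀ᵐ t ∂(volume.restrict (Ioo 0 T)), ∀ (uu ξξ vv ηη : X),
      ‖gt t uu ξξ - gt t vv ηη‖ ≤ b t * (‖uu - vv‖ + ‖ξξ - ηη‖))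
    (hδ : K₁ * γ / c < 1)
    (u u' : ℝ → X) (hu : IsW11 T u u')
    (x₀ : X) (hx₀ : x₀ ∈ Zs (g 0 (u 0) (u 0 - x₀)))
    (ξ ξ' : ℝ → X) (hξ : IsW11 T ξ ξ')
    (hsol : IsSGPSol T (c / lam) Zs g u x₀ ξ ξ') :
    ∀ᵐ t ∂(volume.restrict (Ioo 0 T)),
      ‖ξ' t‖ ≤ 1 / (1 - K₁ * γ / c) *
        ((1 + ω * K₁ / c) * ‖u' t‖ + K₁ / c * a t) :=
  implicit_apriori_bound_general G Zs hZ Gx lam c L hc hyp1 Gw hgradxall hgradw K₁ C₀ C₁ hK₁ hbdw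
    hlipx hlipw T g gt gu gξ hgt hgu hgxi γ ω Cξ Cu hω a b ha hb hbd₁ hbd₂ hbd₃ hlip₁ hlip₂ hlip₃ hδ
    u u' hu x₀ ξ ξ' hξ hsol
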